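/- Fix disagreement bounds δ_{z,z',a,a'} ∈ [0,1], let 𝒫*_DB be the set of primitive distributions satisfying IV validity, policy monotonicity, and P*(D(z,a)=0, D(z',a')=1) ≤ δ_{z,z',a,a'} · P*(D(z',a')=1) for all z, z', a, a', let ℛ* be a convex set of collections of pmfs on 𝒴² × {0,1}², and let 𝒫* be the set of P* ∈ 𝒫*_DB whose collection of marginal pmfs lies in ℛ*. Then Θ_I(P; 𝒫*) is a convex subset of ℝ (an interval), its supremum equals the supremum of Σ_{z∈𝒵} P(Z=z) · Σ_{(y0,y1,d0,d1)} (d1·y1 + (1−d1)·y0) · π_z(y0,y1,d0,d1) over collections {π_z}_{z∈𝒵} ∈ ℛ* satisfying consistency with policy monotonicity (π_z(y0,y1,1,0) = 0 for all y0, y1, z), the data-matching, common-marginal, and pmf conditions (conditions 1–3), and the disagreement-bound inequalities Σ_{(y0,y1)} min{π(y0,y1,D(z,a)=1), π(y0,y1,D(z',a')=1)} ≥ (1 − δ_{z,z',a,a'}) · π(D(z',a')=1) for all z, z', a, a' (condition 4); and its infimum equals the analogous infimum. -/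

import Mathlib

/-!
Under IV validity and data matching the primitive distribution factorises as
`P*(Y(0), Y(1), D, Z) = ν(Y(0), Y(1), D) · P(Z)`, so the judges' marginals `π_z` and
`θ = E[Y(D(Z,1))]` are linear in the joint weights `ν`, and `θ` is the LP objective evaluated
at `π`. Policy monotonicity and data matching are conditions on the `π_z` alone; the
disagreement bounds become condition (4) through the Fréchet bound
`P*(y0, y1, D(z,a) = D(z',a') = 1) ≤ min(π(y0,y1,D(z,a)=1), π(y0,y1,D(z',a')=1))`.

Conversely, any feasible `π` is attained: given `(y0, y1)`, draw `U` uniformly from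
`[0, P*(Y(0)=y0, Y(1)=y1))` and set `D(z,a) = [U < π(y0,y1,D(z,a)=1)]`. This comonotone coupling
has the prescribed marginals and attains the Fréchet bound, so (4) gives the disagreement bounds.
Hence the identified set is the image of the convex feasible set under the linear objective.
-/

open Finset
open scoped Classical

namespace IVPol

/-- Sample space of model primitives `(Y(0), Y(1), D(·,·), Z)`:
a point records the two potential outcomes (elements of the finite outcome set `Y ⊆ ℝ`),
the potential treatments `D(z, a) ∈ {0,1}` for every judge `z` and policy `a`,
and the instrument value `Z`. -/
abbrev Prim (Y : Finset ℝ) (K : ℕ) := Y × Y × (Fin K → Bool → Bool) × Fin K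

/-- Sample space of the observed data `(Y, D, Z)`. -/
abbrev Obs (Y : Finset ℝ) (K : ℕ) := Y × Bool × Fin K

/-- A probability distribution on a finite type, given by its pmf. -/
structure Dist (α : Type*) [Fintype α] where
  p : α → ℝ
  nonneg : ∀ a, 0 ≤ p a
  sum_one : ∑ a, p a = 1

/-- Probability of an event. -/
noncomputable def Dist.pr {α : Type*} [Fintype α] (P : Dist α) (A : Set α) : ℝ :=
  ∑ a, if a ∈ A then P.p a else 0

/-- Expectation of a real-valued random variable. -/
noncomputable def Dist.exp {α : Type*} [Fintype α] (P : Dist α) (f : α → ℝ) : ℝ :=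
  ∑ a, P.p a * f a

variable {Y : Finset ℝ} {K : ℕ}

/-- Potential treatment `D(z, a)`. -/
def pd (ω : Prim Y K) (z : Fin K) (a : Bool) : Bool := ω.2.2.1 z a

/-- The instrument `Z`. -/
def pz (ω : Prim Y K) : Fin K := ω.2.2.2

/-- Observed treatment `D = D(Z, 0)`. -/
def obsD (ω : Prim Y K) : Bool := pd ω (pz ω) false

/-- Observed outcome `Y = Y(D(Z, 0))`. -/
def obsY (ω : Prim Y K) : Y := if obsD ω then ω.2.1 else ω.1

/-- Counterfactual outcome `Y(D(Z, 1))`. -/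
noncomputable def cfY (ω : Prim Y K) : ℝ :=
  if pd ω (pz ω) true then (ω.2.1 : ℝ) else (ω.1 : ℝ)

/-- IV validity: `(Y(0), Y(1), D(·,·))` is independent of `Z`. -/
def IVvalid (Ps : Dist (Prim Y K)) : Prop :=
  ∀ (a b : Y) (g : Fin K → Bool → Bool) (z : Fin K),
    Ps.pr {ω | ω.1 = a ∧ ω.2.1 = b ∧ ω.2.2.1 = g ∧ ω.2.2.2 = z}
      = Ps.pr {ω | ω.1 = a ∧ ω.2.1 = b ∧ ω.2.2.1 = g} * Ps.pr {ω | ω.2.2.2 = z}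

/-- `Ps` generates the observed data distribution `P`:
the law of `(Y(D(Z,0)), D(Z,0), Z)` under `Ps` is `P`. -/
def generates (Ps : Dist (Prim Y K)) (P : Dist (Obs Y K)) : Prop :=
  ∀ (y : Y) (d : Bool) (z : Fin K),
    P.p (y, d, z) = Ps.pr {ω | obsY ω = y ∧ obsD ω = d ∧ pz ω = z}

/-- Marginal pmf of judge `z`:
`π_z(y0, y1, d0, d1) = P*(Y(0)=y0, Y(1)=y1, D(z,0)=d0, D(z,1)=d1)`. -/
noncomputable def marginal (Ps : Dist (Prim Y K)) (z : Fin K) (y0 y1 : Y) (d0 d1 : Bool) : ℝ :=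
  Ps.pr {ω | ω.1 = y0 ∧ ω.2.1 = y1 ∧ pd ω z false = d0 ∧ pd ω z true = d1}

/-- Probability of `Z = z` under the observed distribution. -/
noncomputable def prZ (P : Dist (Obs Y K)) (z : Fin K) : ℝ := P.pr {o | o.2.2 = z}

/-- Conditional probability `P(Y = y, D = d | Z = z)` of the observed data. -/
noncomputable def obsCond (P : Dist (Obs Y K)) (y : Y) (d : Bool) (z : Fin K) : ℝ :=
  P.p (y, d, z) / prZ P z

/-- A collection of candidate marginal pmfs, one for each judge. -/
abbrev Coll (Y : Finset ℝ) (K : ℕ) := Fin K → Y → Y → Bool → Bool → ℝ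

/-- The collection of marginal pmfs of a primitive distribution. -/
noncomputable def marginalColl (Ps : Dist (Prim Y K)) : Coll Y K :=
  fun z y0 y1 d0 d1 => marginal Ps z y0 y1 d0 d1

/-- Policy monotonicity: `D(z,1) ≥ D(z,0)` almost surely, for every judge `z`. -/
def policyMono (Ps : Dist (Prim Y K)) : Prop :=
  ∀ z : Fin K, Ps.pr {ω | pd ω z false ≤ pd ω z true} = 1

/-- The disagreement bounds `P*(D(z,a)=0, D(z',a')=1) ≤ δ_{z,z',a,a'} · P*(D(z',a')=1)`. -/
def disagBound (δ : Fin K → Fin K → Bool → Bool → ℝ) (Ps : Dist (Prim Y K)) : Prop :=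
  ∀ (z z' : Fin K) (a a' : Bool),
    Ps.pr {ω | pd ω z a = false ∧ pd ω z' a' = true}
      ≤ δ z z' a a' * Ps.pr {ω | pd ω z' a' = true}

/-- `π(y0, y1, D(z,a)=1)`: the implied mass of `{Y(0)=y0, Y(1)=y1, D(z,a)=1}`. -/
def margD1 (π : Coll Y K) (z : Fin K) (a : Bool) (y0 y1 : Y) : ℝ :=
  ∑ d0 : Bool, ∑ d1 : Bool,
    if (if a then d1 else d0) = true then π z y0 y1 d0 d1 else 0

/-- `π(D(z,a)=1)`: the implied mass of `{D(z,a)=1}`. -/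
def margD1tot (π : Coll Y K) (z : Fin K) (a : Bool) : ℝ :=
  ∑ y0 : Y, ∑ y1 : Y, margD1 π z a y0 y1

/-- Conditions (1)–(4): data matching, common potential-outcome marginal, validity
of the pmfs, and the disagreement-bound inequalities; together with consistency with
policy monotonicity. -/
def dbConstraints [NeZero K] (δ : Fin K → Fin K → Bool → Bool → ℝ)
    (P : Dist (Obs Y K)) (π : Coll Y K) : Prop :=
  (∀ (z : Fin K) (y0 y1 : Y), π z y0 y1 true false = 0) ∧
  (∀ (y : Y) (z : Fin K),
      obsCond P y true z = ∑ y0 : Y, ∑ d1 : Bool, π z y0 y true d1) ∧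
  (∀ (y : Y) (z : Fin K),
      obsCond P y false z = ∑ y1 : Y, ∑ d1 : Bool, π z y y1 false d1) ∧
  (∀ (y0 y1 : Y) (z : Fin K),
      ∑ d0 : Bool, ∑ d1 : Bool, π z y0 y1 d0 d1
        = ∑ d0 : Bool, ∑ d1 : Bool, π 0 y0 y1 d0 d1) ∧
  (∀ (z : Fin K) (y0 y1 : Y) (d0 d1 : Bool), 0 ≤ π z y0 y1 d0 d1) ∧
  (∀ z : Fin K, ∑ y0 : Y, ∑ y1 : Y, ∑ d0 : Bool, ∑ d1 : Bool, π z y0 y1 d0 d1 = 1) ∧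
  (∀ (z z' : Fin K) (a a' : Bool),
      ∑ y0 : Y, ∑ y1 : Y, min (margD1 π z a y0 y1) (margD1 π z' a' y0 y1)
        ≥ (1 - δ z z' a a') * margD1tot π z' a')

/-- The linear-programming objective
`∑_z P(Z=z) ∑_{y0,y1,d0,d1} (d1·y1 + (1−d1)·y0) · π_z(y0,y1,d0,d1)`. -/
noncomputable def objective (P : Dist (Obs Y K)) (π : Coll Y K) : ℝ :=
  ∑ z : Fin K, prZ P z *
    ∑ y0 : Y, ∑ y1 : Y, ∑ d0 : Bool, ∑ d1 : Bool,
      (if d1 then (y1 : ℝ) else (y0 : ℝ)) * π z y0 y1 d0 d1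

/-- Average counterfactual outcome `θ = E[Y(D(Z,1))]`. -/
noncomputable def theta (Ps : Dist (Prim Y K)) : ℝ := Ps.exp cfY

/-- The identified set for the average counterfactual outcome. -/
def ThetaI (P : Dist (Obs Y K)) (fam : Set (Dist (Prim Y K))) : Set ℝ :=
  {t | ∃ Ps ∈ fam, generates Ps P ∧ theta Ps = t}

open MeasureTheory

namespace Dist
variable {α β : Type*} [Fintype α] [Fintype β]

lemma pr_nonneg (P : Dist α) (A : Set α) : 0 ≤ P.pr A :=
  Finset.sum_nonneg fun a _ => by split <;> simp [P.nonneg]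

lemma pr_setOf (P : Dist α) (Q : α → Prop) [DecidablePred Q] :
    P.pr {a | Q a} = ∑ a, if Q a then P.p a else 0 :=
  Finset.sum_congr rfl fun _ _ => by congr

lemma pr_singleton (P : Dist α) (a : α) : P.pr {a} = P.p a := by
  simp [Dist.pr]

lemma pr_eq_pr_preimage {P : Dist β} {Q : Dist α} {f : α → β}
    (h : ∀ b, P.p b = Q.pr {a | f a = b}) (B : Set β) : P.pr B = Q.pr (f ⁻¹' B) := by
  rw [Dist.pr, Dist.pr, ← Finset.sum_fiberwise univ f]
  refine Finset.sum_congr rfl fun b _ => ?_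
  rw [h, Dist.pr, Finset.sum_filter]
  by_cases hb : b ∈ B
  · rw [if_pos hb]
    exact Finset.sum_congr rfl fun a _ => by by_cases ha : f a = b <;> simp [ha, hb]
  · rw [if_neg hb]
    exact (Finset.sum_eq_zero fun a _ => by by_cases ha : f a = b <;> simp [ha, hb]).symm

end Dist

abbrev Pattern (K : ℕ) := Fin K → Bool → Bool

lemma sum_prZ (P : Dist (Obs Y K)) : ∑ z, prZ P z = 1 := by
  simp only [prZ, Dist.pr_setOf]
  rw [Finset.sum_comm]
  simp [P.sum_one]

lemma margD1_false (π : Coll Y K) (z : Fin K) (y0 y1 : Y) :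
    margD1 π z false y0 y1 = π z y0 y1 true true + π z y0 y1 true false := by
  simp [margD1]

lemma margD1_true (π : Coll Y K) (z : Fin K) (y0 y1 : Y) :
    margD1 π z true y0 y1 = π z y0 y1 true true + π z y0 y1 false true := by
  simp [margD1, add_comm]

def marginalsOf (ν : Y → Y → Pattern K → ℝ) : Coll Y K :=
  fun z y0 y1 d0 d1 => ∑ g : Pattern K, if g z false = d0 ∧ g z true = d1 then ν y0 y1 g else 0

section Marginals
variable (ν : Y → Y → Pattern K → ℝ) (z : Fin K) (y0 y1 : Y)

lemma sum_mul_marginalsOf (F : Bool → Bool → ℝ) :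
    ∑ d0, ∑ d1, F d0 d1 * marginalsOf ν z y0 y1 d0 d1
      = ∑ g : Pattern K, F (g z false) (g z true) * ν y0 y1 g := by
  simp only [marginalsOf, Finset.mul_sum, Fintype.sum_bool, ← Finset.sum_add_distrib]
  refine Finset.sum_congr rfl fun g _ => ?_
  cases g z false <;> cases g z true <;> simp

lemma margD1_marginalsOf (a : Bool) :
    margD1 (marginalsOf ν) z a y0 y1 = ∑ g : Pattern K, if g z a = true then ν y0 y1 g else 0 := by
  have := sum_mul_marginalsOf ν z y0 y1 fun d0 d1 => if (if a then d1 else d0) = true then 1 else 0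
  cases a <;> simpa [margD1, ite_mul] using this

lemma sum_marginalsOf :
    ∑ d0, ∑ d1, marginalsOf ν z y0 y1 d0 d1 = ∑ g : Pattern K, ν y0 y1 g := by
  simpa using sum_mul_marginalsOf ν z y0 y1 fun _ _ => 1

lemma sum_d1_marginalsOf (d0 : Bool) :
    ∑ d1, marginalsOf ν z y0 y1 d0 d1
      = ∑ g : Pattern K, if g z false = d0 then ν y0 y1 g else 0 := by
  simpa [ite_mul] using sum_mul_marginalsOf ν z y0 y1 fun d0' _ => if d0' = d0 then 1 else 0

lemma marginalsOf_nonneg (hν : ∀ y0 y1 g, 0 ≤ ν y0 y1 g) (d0 d1 : Bool) :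
    0 ≤ marginalsOf ν z y0 y1 d0 d1 :=
  Finset.sum_nonneg fun g _ => by split_ifs <;> simp [hν]

lemma margD1tot_marginalsOf_sub_le_sum_min (hν : ∀ y0 y1 g, 0 ≤ ν y0 y1 g)
    (z z' : Fin K) (a a' : Bool) :
    margD1tot (marginalsOf ν) z' a'
        - ∑ y0, ∑ y1, ∑ g : Pattern K, (if g z a = false ∧ g z' a' = true then ν y0 y1 g else 0)
      ≤ ∑ y0, ∑ y1,
          min (margD1 (marginalsOf ν) z a y0 y1) (margD1 (marginalsOf ν) z' a' y0 y1) := by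
  simp only [margD1tot, margD1_marginalsOf, ← Finset.sum_sub_distrib]
  gcongr with y0 _ y1 _
  refine le_min (Finset.sum_le_sum fun g _ => ?_) (Finset.sum_le_sum fun g _ => ?_) <;>
    cases g z a <;> cases g z' a' <;> simp [hν]

end Marginals

section Comonotone
variable {ι κ : Type*} [Fintype ι] [Fintype κ] [DecidableEq ι] [DecidableEq κ]

noncomputable def thresholdPattern (p : ι → κ → ℝ) (u : ℝ) : ι → κ → Bool :=
  fun i j => decide (u < p i j)

omit [Fintype ι] [Fintype κ] [DecidableEq ι] [DecidableEq κ] in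
lemma measurable_thresholdPattern (p : ι → κ → ℝ) : Measurable (thresholdPattern p) := by
  refine measurable_pi_lambda _ fun i => measurable_pi_lambda _ fun j => ?_
  refine measurable_to_countable' fun b => ?_
  cases b
  · convert measurableSet_Ici (a := p i j) using 1; ext; simp [thresholdPattern]
  · convert measurableSet_Iio (a := p i j) using 1; ext; simp [thresholdPattern]

noncomputable def comonotoneWeight (p : ι → κ → ℝ) (q : ℝ) (g : ι → κ → Bool) : ℝ :=
  volume.real (thresholdPattern p ⁻¹' {g} ∩ Set.Ico 0 q)

lemma sum_ite_comonotoneWeight (p : ι → κ → ℝ) (q : ℝ) (C : (ι → κ → Bool) → Prop)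
    [DecidablePred C] :
    ∑ g, (if C g then comonotoneWeight p q g else 0)
      = volume.real ({u | C (thresholdPattern p u)} ∩ Set.Ico 0 q) := by
  have := sum_measureReal_preimage_singleton (μ := volume.restrict (Set.Ico 0 q)) (univ.filter C)
    (f := thresholdPattern p) (fun g _ => measurable_thresholdPattern p (measurableSet_singleton g))
  simp only [measureReal_restrict_apply' measurableSet_Ico] at this
  rw [← Finset.sum_filter]
  unfold comonotoneWeight
  rw [this]
  congr 1
  ext u; simp

lemma sum_ite_comonotoneWeight_of_eq_Ico (p : ι → κ → ℝ) (q : ℝ) (C : (ι → κ → Bool) → Prop)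
    [DecidablePred C] {a b : ℝ} (hab : a ≤ b)
    (h : {u | C (thresholdPattern p u)} ∩ Set.Ico 0 q = Set.Ico a b) :
    ∑ g, (if C g then comonotoneWeight p q g else 0) = b - a := by
  rw [sum_ite_comonotoneWeight, h, Real.volume_real_Ico_of_le hab]

lemma sum_comonotoneWeight (p : ι → κ → ℝ) {q : ℝ} (h0 : 0 ≤ q) :
    ∑ g, comonotoneWeight p q g = q := by
  simpa using sum_ite_comonotoneWeight_of_eq_Ico p q (fun _ => True) h0 (by simp)

variable {p : ι → κ → ℝ} {q : ℝ} (hp : ∀ i j, p i j ∈ Set.Icc 0 q)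
include hp

lemma sum_comonotoneWeight_true_true (i : ι) (j : κ) (i' : ι) (j' : κ) :
    ∑ g, (if g i j = true ∧ g i' j' = true then comonotoneWeight p q g else 0)
      = min (p i j) (p i' j') := by
  rw [sum_ite_comonotoneWeight_of_eq_Ico p q (fun g => g i j = true ∧ g i' j' = true)
    (le_min (hp i j).1 (hp i' j').1), sub_zero]
  ext u
  grind [thresholdPattern]

lemma sum_comonotoneWeight_false_true (i : ι) (j : κ) (i' : ι) (j' : κ) :
    ∑ g, (if g i j = false ∧ g i' j' = true then comonotoneWeight p q g else 0)
      = p i' j' - min (p i j) (p i' j') := by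
  rw [sum_ite_comonotoneWeight_of_eq_Ico p q (fun g => g i j = false ∧ g i' j' = true)
    (min_le_right _ _)]
  ext u
  grind [thresholdPattern]

lemma sum_comonotoneWeight_true_false (i : ι) (j : κ) (i' : ι) (j' : κ) :
    ∑ g, (if g i j = true ∧ g i' j' = false then comonotoneWeight p q g else 0)
      = p i j - min (p i j) (p i' j') := by
  rw [sum_ite_comonotoneWeight_of_eq_Ico p q (fun g => g i j = true ∧ g i' j' = false)
    (min_le_left _ _)]
  ext u
  grind [thresholdPattern]

lemma sum_comonotoneWeight_false_false (i : ι) (j : κ) (i' : ι) (j' : κ) :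
    ∑ g, (if g i j = false ∧ g i' j' = false then comonotoneWeight p q g else 0)
      = q - max (p i j) (p i' j') := by
  rw [sum_ite_comonotoneWeight_of_eq_Ico p q (fun g => g i j = false ∧ g i' j' = false)
    (max_le (hp i j).2 (hp i' j').2)]
  ext u
  grind [thresholdPattern]

end Comonotone

lemma cfY_mk (y0 y1 : Y) (g : Pattern K) (z : Fin K) :
    cfY (y0, y1, g, z) = if g z true then (y1 : ℝ) else y0 :=
  rfl

lemma Dist.pr_atom (Ps : Dist (Prim Y K)) (y0 y1 : Y) (g : Pattern K) (z : Fin K) :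
    Ps.pr {ω | ω.1 = y0 ∧ ω.2.1 = y1 ∧ ω.2.2.1 = g ∧ ω.2.2.2 = z} = Ps.p (y0, y1, g, z) := by
  rw [← Dist.pr_singleton]
  congr 1
  ext ⟨a, b, c, d⟩
  simp

def IsProduct (P : Dist (Obs Y K)) (ν : Y → Y → Pattern K → ℝ) (Ps : Dist (Prim Y K)) : Prop :=
  ∀ y0 y1 g z, Ps.p (y0, y1, g, z) = ν y0 y1 g * prZ P z

namespace IsProduct
variable {P : Dist (Obs Y K)} {ν : Y → Y → Pattern K → ℝ} {Ps : Dist (Prim Y K)}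
  (hprod : IsProduct P ν Ps)
include hprod

lemma pr_setOf_and_pz_eq (Q : Y → Y → Pattern K → Prop) [∀ y0 y1 g, Decidable (Q y0 y1 g)]
    (z : Fin K) :
    Ps.pr {ω | Q ω.1 ω.2.1 ω.2.2.1 ∧ ω.2.2.2 = z}
      = prZ P z * ∑ y0, ∑ y1, ∑ g, if Q y0 y1 g then ν y0 y1 g else 0 := by
  unfold IsProduct at hprod
  simp only [Dist.pr_setOf, Fintype.sum_prod_type, hprod, Finset.mul_sum]
  refine Finset.sum_congr rfl fun y0 _ => Finset.sum_congr rfl fun y1 _ =>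
    Finset.sum_congr rfl fun g _ => ?_
  by_cases hQ : Q y0 y1 g <;> simp [hQ, mul_comm]

lemma pr_setOf (Q : Y → Y → Pattern K → Prop) [∀ y0 y1 g, Decidable (Q y0 y1 g)] :
    Ps.pr {ω | Q ω.1 ω.2.1 ω.2.2.1} = ∑ y0, ∑ y1, ∑ g, if Q y0 y1 g then ν y0 y1 g else 0 := by
  unfold IsProduct at hprod
  simp only [Dist.pr_setOf, Fintype.sum_prod_type, hprod]
  refine Finset.sum_congr rfl fun y0 _ => Finset.sum_congr rfl fun y1 _ =>
    Finset.sum_congr rfl fun g _ => ?_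
  by_cases hQ : Q y0 y1 g <;> simp [hQ, ← Finset.mul_sum, sum_prZ]

lemma sum_eq_one : ∑ y0, ∑ y1, ∑ g, ν y0 y1 g = 1 := by
  simpa [Dist.pr, Ps.sum_one] using (hprod.pr_setOf fun _ _ _ => True).symm

lemma marginalColl_eq : marginalColl Ps = marginalsOf ν := by
  funext z y0 y1 d0 d1
  have := hprod.pr_setOf fun a b g => a = y0 ∧ b = y1 ∧ g z false = d0 ∧ g z true = d1
  simpa [marginalColl, marginal, pd, marginalsOf, ite_and] using this

lemma theta_eq : theta Ps = objective P (marginalsOf ν) := by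
  have key : ∀ z y0 y1, ∑ d0, ∑ d1, (if d1 then (y1 : ℝ) else y0) * marginalsOf ν z y0 y1 d0 d1
      = ∑ g : Pattern K, (if g z true then (y1 : ℝ) else y0) * ν y0 y1 g :=
    fun z y0 y1 => sum_mul_marginalsOf ν z y0 y1 fun _ d1 => if d1 then (y1 : ℝ) else y0
  unfold IsProduct at hprod
  simp only [objective, key, theta, Dist.exp, Fintype.sum_prod_type, hprod, cfY_mk,
    Finset.mul_sum]
  -- bring the sum over judges `z` to the outside
  simp only [Finset.sum_comm (t := (Finset.univ : Finset (Fin K)))]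
  refine Finset.sum_congr rfl fun z _ => Finset.sum_congr rfl fun y0 _ =>
    Finset.sum_congr rfl fun y1 _ => Finset.sum_congr rfl fun g _ => by ring

lemma pr_obs_eq (y : Y) (d : Bool) (z : Fin K) :
    Ps.pr {ω | obsY ω = y ∧ obsD ω = d ∧ pz ω = z} = prZ P z *
      if d then ∑ y0, ∑ d1, marginalsOf ν z y0 y true d1
      else ∑ y1, ∑ d1, marginalsOf ν z y y1 false d1 := by
  have hset : {ω : Prim Y K | obsY ω = y ∧ obsD ω = d ∧ pz ω = z}
      = {ω | ((if d then ω.2.1 else ω.1) = y ∧ ω.2.2.1 z false = d) ∧ ω.2.2.2 = z} := by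
    ext ⟨y0, y1, g, z'⟩
    simp only [obsY, obsD, pd, pz, Set.mem_ofPred_eq]
    constructor
    · rintro ⟨hy, rfl, rfl⟩
      exact ⟨⟨hy, rfl⟩, rfl⟩
    · rintro ⟨⟨hy, rfl⟩, rfl⟩
      exact ⟨hy, rfl, rfl⟩
  rw [hset, hprod.pr_setOf_and_pz_eq fun y0 y1 g => (if d then y1 else y0) = y ∧ g z false = d]
  cases d <;>
    simp only [ite_and, Finset.sum_ite_irrel, Finset.sum_const_zero, Finset.sum_ite_eq',
      Finset.mem_univ, if_true, Bool.false_eq_true, if_false, sum_d1_marginalsOf]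

lemma generates_iff (hPz : ∀ z, 0 < prZ P z) :
    generates Ps P ↔
      (∀ y z, obsCond P y true z = ∑ y0, ∑ d1, marginalsOf ν z y0 y true d1) ∧
      (∀ y z, obsCond P y false z = ∑ y1, ∑ d1, marginalsOf ν z y y1 false d1) := by
  simp only [generates, hprod.pr_obs_eq, obsCond, div_eq_iff (hPz _).ne', Bool.forall_bool,
    forall_and, if_true, Bool.false_eq_true, if_false, mul_comm (prZ P _)]
  exact and_comm

lemma policyMono_iff (hν : ∀ y0 y1 g, 0 ≤ ν y0 y1 g) :
    policyMono Ps ↔ ∀ z y0 y1, marginalsOf ν z y0 y1 true false = 0 := by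
  have hgood : ∀ z, Ps.pr {ω | pd ω z false ≤ pd ω z true}
      = 1 - ∑ y0, ∑ y1, marginalsOf ν z y0 y1 true false := by
    intro z
    rw [eq_sub_iff_add_eq, ← hprod.sum_eq_one]
    simp only [pd, hprod.pr_setOf fun _ _ g => g z false ≤ g z true, marginalsOf,
      ← Finset.sum_add_distrib]
    refine Finset.sum_congr rfl fun y0 _ => Finset.sum_congr rfl fun y1 _ =>
      Finset.sum_congr rfl fun g _ => ?_
    cases g z false <;> cases g z true <;> simp
  have hnn : ∀ z y0 y1, 0 ≤ marginalsOf ν z y0 y1 true false :=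
    fun z y0 y1 => marginalsOf_nonneg ν z y0 y1 hν _ _
  simp only [policyMono, hgood, sub_eq_self]
  refine forall_congr' fun z => ?_
  simp only [Finset.sum_eq_zero_iff_of_nonneg fun y0 _ => Finset.sum_nonneg fun y1 _ => hnn z y0 y1,
    Finset.sum_eq_zero_iff_of_nonneg fun y1 _ => hnn z _ y1, Finset.mem_univ, true_implies]

lemma disagBound_iff (δ : Fin K → Fin K → Bool → Bool → ℝ) :
    disagBound δ Ps ↔ ∀ z z' a a',
      ∑ y0, ∑ y1, ∑ g : Pattern K, (if g z a = false ∧ g z' a' = true then ν y0 y1 g else 0)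
        ≤ δ z z' a a' * margD1tot (marginalsOf ν) z' a' := by
  simp only [disagBound, margD1tot, margD1_marginalsOf, pd]
  refine forall₄_congr fun z z' a a' => ?_
  rw [hprod.pr_setOf fun _ _ g => g z a = false ∧ g z' a' = true,
    hprod.pr_setOf fun _ _ g => g z' a' = true]

lemma ivValid : IVvalid Ps := by
  intro y0 y1 g z
  have hZ := hprod.pr_setOf_and_pz_eq (fun _ _ _ => True) z
  simp only [true_and, if_true, hprod.sum_eq_one, mul_one] at hZ
  have hcyl := hprod.pr_setOf fun a b c => a = y0 ∧ b = y1 ∧ c = g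
  simp only [ite_and, Finset.sum_ite_irrel, Finset.sum_const_zero, Finset.sum_ite_eq',
    Finset.mem_univ, if_true] at hcyl
  rw [Dist.pr_atom, hprod, hcyl, hZ]

end IsProduct

lemma pr_pz_eq_of_generates {P : Dist (Obs Y K)} {Ps : Dist (Prim Y K)} (hgen : generates Ps P)
    (z : Fin K) : Ps.pr {ω | ω.2.2.2 = z} = prZ P z := by
  refine (Dist.pr_eq_pr_preimage (f := fun ω => (obsY ω, obsD ω, pz ω)) (fun o => ?_)
    {o | o.2.2 = z}).symm
  simp only [hgen o.1 o.2.1 o.2.2, Prod.ext_iff]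

lemma isProduct_of_IVvalid {P : Dist (Obs Y K)} {Ps : Dist (Prim Y K)} (hIV : IVvalid Ps)
    (hgen : generates Ps P) :
    IsProduct P (fun y0 y1 g => Ps.pr {ω | ω.1 = y0 ∧ ω.2.1 = y1 ∧ ω.2.2.1 = g}) Ps := by
  intro y0 y1 g z
  rw [← Dist.pr_atom, hIV, pr_pz_eq_of_generates hgen]

theorem dbConstraints_marginalColl_and_theta_eq [NeZero K] {δ : Fin K → Fin K → Bool → Bool → ℝ}
    {P : Dist (Obs Y K)} (hPz : ∀ z, 0 < prZ P z) {Ps : Dist (Prim Y K)} (hIV : IVvalid Ps)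
    (hM : policyMono Ps) (hDB : disagBound δ Ps) (hgen : generates Ps P) :
    dbConstraints δ P (marginalColl Ps) ∧ theta Ps = objective P (marginalColl Ps) := by
  have hprod := isProduct_of_IVvalid hIV hgen
  have hν : ∀ y0 y1 g, 0 ≤ Ps.pr {ω | ω.1 = y0 ∧ ω.2.1 = y1 ∧ ω.2.2.1 = g} :=
    fun _ _ _ => Dist.pr_nonneg _ _
  obtain ⟨hdata1, hdata0⟩ := (hprod.generates_iff hPz).1 hgen
  rw [hprod.marginalColl_eq, ← hprod.theta_eq]
  refine ⟨⟨(hprod.policyMono_iff hν).1 hM, hdata1, hdata0, fun y0 y1 z => ?_,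
    fun z y0 y1 => marginalsOf_nonneg _ z y0 y1 hν, fun z => ?_, fun z z' a a' => ?_⟩, rfl⟩
  · rw [sum_marginalsOf, sum_marginalsOf]
  · simp only [sum_marginalsOf, hprod.sum_eq_one]
  · have hdisag := (hprod.disagBound_iff δ).1 hDB z z' a a'
    have hfrechet := margD1tot_marginalsOf_sub_le_sum_min _ hν z z' a a'
    linarith

noncomputable def comonotoneCoupling [NeZero K] (π : Coll Y K) : Y → Y → Pattern K → ℝ :=
  fun y0 y1 => comonotoneWeight (fun z a => margD1 π z a y0 y1) (∑ d0, ∑ d1, π 0 y0 y1 d0 d1)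

section ComonotoneCoupling
variable [NeZero K] {π : Coll Y K} (hπ : ∀ z y0 y1 d0 d1, 0 ≤ π z y0 y1 d0 d1)
  (hcommon : ∀ y0 y1 z, ∑ d0, ∑ d1, π z y0 y1 d0 d1 = ∑ d0, ∑ d1, π 0 y0 y1 d0 d1)
include hπ hcommon

lemma margD1_mem_Icc (y0 y1 : Y) (z : Fin K) (a : Bool) :
    margD1 π z a y0 y1 ∈ Set.Icc 0 (∑ d0, ∑ d1, π 0 y0 y1 d0 d1) := by
  refine ⟨Finset.sum_nonneg fun d0 _ => Finset.sum_nonneg fun d1 _ => ?_, ?_⟩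
  · split_ifs <;> simp [hπ]
  · rw [← hcommon y0 y1 z]
    refine Finset.sum_le_sum fun d0 _ => Finset.sum_le_sum fun d1 _ => ?_
    split_ifs <;> simp [hπ]

lemma sum_comonotoneCoupling (y0 y1 : Y) :
    ∑ g, comonotoneCoupling π y0 y1 g = ∑ d0, ∑ d1, π 0 y0 y1 d0 d1 :=
  sum_comonotoneWeight _ ((margD1_mem_Icc hπ hcommon y0 y1 0 false).1.trans
    (margD1_mem_Icc hπ hcommon y0 y1 0 false).2)

lemma marginalsOf_comonotoneCoupling (hmono : ∀ z y0 y1, π z y0 y1 true false = 0) :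
    marginalsOf (comonotoneCoupling π) = π := by
  funext z y0 y1 d0 d1
  have hp := margD1_mem_Icc hπ hcommon y0 y1
  have h0 : margD1 π z false y0 y1 = π z y0 y1 true true := by
    rw [margD1_false, hmono, add_zero]
  have h1 := margD1_true π z y0 y1
  have hq : ∑ d0, ∑ d1, π 0 y0 y1 d0 d1
      = π z y0 y1 true true + π z y0 y1 false true + π z y0 y1 false false := by
    rw [← hcommon y0 y1 z]
    simp only [Fintype.sum_bool, hmono]
    ring
  have hft := hπ z y0 y1 false true
  simp only [marginalsOf, comonotoneCoupling]
  cases d0 <;> cases d1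
  · rw [sum_comonotoneWeight_false_false hp, max_eq_right (by linarith), h1, hq]
    ring
  · rw [sum_comonotoneWeight_false_true hp, min_eq_left (by linarith), h0, h1]
    ring
  · rw [sum_comonotoneWeight_true_false hp, min_eq_left (by linarith), sub_self, hmono]
  · rw [sum_comonotoneWeight_true_true hp, min_eq_left (by linarith), h0]

lemma sum_comonotoneCoupling_false_true (z z' : Fin K) (a a' : Bool) :
    ∑ y0, ∑ y1, ∑ g : Pattern K,
        (if g z a = false ∧ g z' a' = true then comonotoneCoupling π y0 y1 g else 0)
      = margD1tot π z' a' - ∑ y0, ∑ y1, min (margD1 π z a y0 y1) (margD1 π z' a' y0 y1) := by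
  simp only [margD1tot, ← Finset.sum_sub_distrib, comonotoneCoupling]
  exact Finset.sum_congr rfl fun y0 _ => Finset.sum_congr rfl fun y1 _ =>
    sum_comonotoneWeight_false_true (margD1_mem_Icc hπ hcommon y0 y1) z a z' a'

end ComonotoneCoupling

noncomputable def productDist (P : Dist (Obs Y K)) (ν : Y → Y → Pattern K → ℝ)
    (hν : ∀ y0 y1 g, 0 ≤ ν y0 y1 g) (hν1 : ∑ y0, ∑ y1, ∑ g, ν y0 y1 g = 1) :
    Dist (Prim Y K) where
  p ω := ν ω.1 ω.2.1 ω.2.2.1 * prZ P ω.2.2.2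
  nonneg ω := mul_nonneg (hν _ _ _) (Dist.pr_nonneg _ _)
  sum_one := by simp only [Fintype.sum_prod_type, ← Finset.mul_sum, sum_prZ, mul_one, hν1]

theorem exists_primitive_of_dbConstraints [NeZero K] {δ : Fin K → Fin K → Bool → Bool → ℝ}
    {P : Dist (Obs Y K)} (hPz : ∀ z, 0 < prZ P z) {π : Coll Y K} (hc : dbConstraints δ P π) :
    ∃ Ps : Dist (Prim Y K), (IVvalid Ps ∧ policyMono Ps ∧ disagBound δ Ps) ∧ generates Ps P ∧
      marginalColl Ps = π ∧ theta Ps = objective P π := by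
  obtain ⟨hmono, hdata1, hdata0, hcommon, hπ, hsum, hfrechet⟩ := hc
  have hmarg := marginalsOf_comonotoneCoupling hπ hcommon hmono
  have hν : ∀ y0 y1 g, 0 ≤ comonotoneCoupling π y0 y1 g := fun _ _ _ => measureReal_nonneg
  have hν1 : ∑ y0, ∑ y1, ∑ g, comonotoneCoupling π y0 y1 g = 1 := by
    simpa only [sum_comonotoneCoupling hπ hcommon] using hsum 0
  have hprod : IsProduct P (comonotoneCoupling π) (productDist P (comonotoneCoupling π) hν hν1) :=
    fun _ _ _ _ => rfl
  refine ⟨_, ⟨hprod.ivValid, (hprod.policyMono_iff hν).2 ?_, (hprod.disagBound_iff δ).2 ?_⟩,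
    (hprod.generates_iff hPz).2 ?_, hprod.marginalColl_eq.trans hmarg, ?_⟩
  · rw [hmarg]
    exact hmono
  · intro z z' a a'
    have hzz' := hfrechet z z' a a'
    rw [hmarg, sum_comonotoneCoupling_false_true hπ hcommon]
    linarith
  · rw [hmarg]
    exact ⟨hdata1, hdata0⟩
  · rw [hprod.theta_eq, hmarg]

lemma objective_isLinearMap (P : Dist (Obs Y K)) : IsLinearMap ℝ (objective P) := by
  constructor
  · intro π1 π2
    simp [objective, mul_add, Finset.sum_add_distrib]
  · intro c π
    simp only [objective, Pi.smul_apply, smul_eq_mul, Finset.mul_sum, mul_left_comm]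

lemma margD1_add_smul (a b : ℝ) (π1 π2 : Coll Y K) (z : Fin K) (c : Bool) (y0 y1 : Y) :
    margD1 (a • π1 + b • π2) z c y0 y1 = a * margD1 π1 z c y0 y1 + b * margD1 π2 z c y0 y1 := by
  cases c <;>
    simp only [margD1_false, margD1_true, Pi.add_apply, Pi.smul_apply, smul_eq_mul] <;> ring

lemma convex_setOf_dbConstraints [NeZero K] (δ : Fin K → Fin K → Bool → Bool → ℝ)
    (P : Dist (Obs Y K)) : Convex ℝ {π | dbConstraints δ P π} := by
  rintro π1 ⟨hmono1, hdata1, hdata1', hcommon1, hπ1, hsum1, hfrechet1⟩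
    π2 ⟨hmono2, hdata2, hdata2', hcommon2, hπ2, hsum2, hfrechet2⟩ a b ha hb hab
  simp only [Set.mem_ofPred_eq, dbConstraints, Pi.add_apply, Pi.smul_apply, smul_eq_mul,
    Finset.sum_add_distrib, ← Finset.mul_sum]
  refine ⟨fun z y0 y1 => ?_, fun y z => ?_, fun y z => ?_, fun y0 y1 z => ?_,
    fun z y0 y1 d0 d1 => ?_, fun z => ?_, fun z z' c c' => ?_⟩
  · simp [hmono1, hmono2]
  · rw [← hdata1, ← hdata2, ← add_mul, hab, one_mul]
  · rw [← hdata1', ← hdata2', ← add_mul, hab, one_mul]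
  · rw [hcommon1, hcommon2]
  · have := hπ1 z y0 y1 d0 d1
    have := hπ2 z y0 y1 d0 d1
    positivity
  · rw [hsum1, hsum2, mul_one, mul_one, hab]
  · have htot : margD1tot (a • π1 + b • π2) z' c'
        = a * margD1tot π1 z' c' + b * margD1tot π2 z' c' := by
      simp only [margD1tot, margD1_add_smul, Finset.sum_add_distrib, ← Finset.mul_sum]
    have hmin : a * ∑ y0, ∑ y1, min (margD1 π1 z c y0 y1) (margD1 π1 z' c' y0 y1)
          + b * ∑ y0, ∑ y1, min (margD1 π2 z c y0 y1) (margD1 π2 z' c' y0 y1)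
        ≤ ∑ y0, ∑ y1, min (margD1 (a • π1 + b • π2) z c y0 y1)
            (margD1 (a • π1 + b • π2) z' c' y0 y1) := by
      simp only [Finset.mul_sum, ← Finset.sum_add_distrib, margD1_add_smul]
      gcongr with y0 _ y1 _
      exact le_min (by gcongr <;> exact min_le_left _ _) (by gcongr <;> exact min_le_right _ _)
    have h1 := mul_le_mul_of_nonneg_left (hfrechet1 z z' c c') ha
    have h2 := mul_le_mul_of_nonneg_left (hfrechet2 z z' c c') hb
    rw [ge_iff_le, htot]
    linarith

theorem statement5_general {Y : Finset ℝ} {K : ℕ} [NeZero K]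
    (δ : Fin K → Fin K → Bool → Bool → ℝ)
    (P : Dist (Obs Y K)) (hPz : ∀ z : Fin K, 0 < prZ P z)
    (R : Set (Coll Y K)) (hR : Convex ℝ R) :
    Convex ℝ (ThetaI P
        {Ps | (IVvalid Ps ∧ policyMono Ps ∧ disagBound δ Ps) ∧ marginalColl Ps ∈ R}) ∧
    sSup (ThetaI P
        {Ps | (IVvalid Ps ∧ policyMono Ps ∧ disagBound δ Ps) ∧ marginalColl Ps ∈ R})
      = sSup (objective P '' {π | π ∈ R ∧ dbConstraints δ P π}) ∧
    sInf (ThetaI P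
        {Ps | (IVvalid Ps ∧ policyMono Ps ∧ disagBound δ Ps) ∧ marginalColl Ps ∈ R})
      = sInf (objective P '' {π | π ∈ R ∧ dbConstraints δ P π}) := by
  have hset : ThetaI P
      {Ps | (IVvalid Ps ∧ policyMono Ps ∧ disagBound δ Ps) ∧ marginalColl Ps ∈ R}
      = objective P '' {π | π ∈ R ∧ dbConstraints δ P π} := by
    ext t
    constructor
    · rintro ⟨Ps, ⟨⟨hIV, hM, hDB⟩, hR⟩, hgen, rfl⟩
      obtain ⟨hc, htheta⟩ := dbConstraints_marginalColl_and_theta_eq hPz hIV hM hDB hgen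
      exact ⟨_, ⟨hR, hc⟩, htheta.symm⟩
    · rintro ⟨π, ⟨hR, hc⟩, rfl⟩
      obtain ⟨Ps, hPs, hgen, hmarg, htheta⟩ := exists_primitive_of_dbConstraints hPz hc
      exact ⟨Ps, ⟨hPs, hmarg ▸ hR⟩, hgen, htheta⟩
  rw [hset]
  exact ⟨(hR.inter (convex_setOf_dbConstraints δ P)).is_linear_image (objective_isLinearMap P),
    rfl, rfl⟩

/-- Corollary 2: with IV validity, policy monotonicity,
disagreement bounds and convex marginal restrictions `ℛ*`, the identified set for
`θ` is an interval whose endpoints are the optimal values of the linear program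
over collections of marginals subject to conditions (1)–(4). -/
theorem statement5 {Y : Finset ℝ} {K : ℕ} [NeZero K]
    (δ : Fin K → Fin K → Bool → Bool → ℝ)
    (hδ : ∀ (z z' : Fin K) (a a' : Bool), δ z z' a a' ∈ Set.Icc (0 : ℝ) 1)
    (P : Dist (Obs Y K)) (hPz : ∀ z : Fin K, 0 < prZ P z)
    (R : Set (Coll Y K)) (hR : Convex ℝ R) :
    Convex ℝ (ThetaI P
        {Ps | (IVvalid Ps ∧ policyMono Ps ∧ disagBound δ Ps) ∧ marginalColl Ps ∈ R}) ∧
    sSup (ThetaI P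
        {Ps | (IVvalid Ps ∧ policyMono Ps ∧ disagBound δ Ps) ∧ marginalColl Ps ∈ R})
      = sSup (objective P '' {π | π ∈ R ∧ dbConstraints δ P π}) ∧
    sInf (ThetaI P
        {Ps | (IVvalid Ps ∧ policyMono Ps ∧ disagBound δ Ps) ∧ marginalColl Ps ∈ R})
      = sInf (objective P '' {π | π ∈ R ∧ dbConstraints δ P π}) :=
  statement5_general δ P hPz R hR

end IVPol
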